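/- Let A have restricted isometry constants δ_q with 0 < δ_{2k} and δ_{3k} ≤ 1/9. Let x^p ∈ ℝⁿ be k-sparse, u^p = x^p + Aᵀ(y − A x^p), let w^(1), w^(2), w^(3) ∈ P^k be successive compression minimizers at x^p, and let x^# = H_k(u^p ⊗ w^(1) ⊗ w^(2) ⊗ w^(3)). Suppose x^{p+1} satisfies supp(x^{p+1}) ⊆ supp(x^#) and [Aᵀ(y − A x^{p+1})]_{supp(x^#)} = 0 (the ROTP3 iterate). Then ‖x^{p+1} − x_S‖₂ ≤ ρ''·‖x^p − x_S‖₂ + γ̂₁·‖Aᵀν'‖₂ + γ̂₂·‖ν'‖₂, where ρ'' = (1/√(1−δ_{2k}²))·[(δ_{2k} + 6δ_{3k})·√((1+δ_k)/(1−δ_{2k})) + δ_{3k}] < 1, γ̂₁ = (1/√(1−δ_{2k}²))·[1 + (5(δ_{2k}+6δ_{3k})/(δ_{2k}+4δ_{3k}))·√((1+δ_k)/(1−δ_{2k}))], and γ̂₂ = (1/√(1−δ_{2k}²))·[2(δ_{2k}+6δ_{3k})/((δ_{2k}+4δ_{3k})·√(1−δ_{2k})) + 1/(1−δ_{2k})].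 -/

import Mathlib

open Finset

noncomputable def nsq {ι : Type*} [Fintype ι] (x : ι → ℝ) : ℝ := ∑ i, (x i) ^ 2

noncomputable def n2 {ι : Type*} [Fintype ι] (x : ι → ℝ) : ℝ := Real.sqrt (nsq x)

noncomputable def supp {n : ℕ} (x : Fin n → ℝ) : Finset (Fin n) :=
  Finset.univ.filter (fun i => x i ≠ 0)

def Sparse {n : ℕ} (k : ℕ) (x : Fin n → ℝ) : Prop := (supp x).card ≤ k

def restr {n : ℕ} (x : Fin n → ℝ) (T : Finset (Fin n)) : Fin n → ℝ :=
  fun i => if i ∈ T then x i else 0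

def SatRIP {m n : ℕ} (A : Matrix (Fin m) (Fin n) ℝ) (q : ℕ) (δ : ℝ) : Prop :=
  ∀ z : Fin n → ℝ, Sparse q z →
    (1 - δ) * nsq z ≤ nsq (A.mulVec z) ∧ nsq (A.mulVec z) ≤ (1 + δ) * nsq z

/-- `δ` is the `q`-th order restricted isometry constant of `A`:
the smallest `δ' ≥ 0` such that `(1-δ')‖z‖² ≤ ‖Az‖² ≤ (1+δ')‖z‖²` for all `q`-sparse `z`. -/
def IsRIC {m n : ℕ} (A : Matrix (Fin m) (Fin n) ℝ) (q : ℕ) (δ : ℝ) : Prop :=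
  IsLeast {δ' : ℝ | 0 ≤ δ' ∧ SatRIP A q δ'} δ

/-- membership in `W^k`: binary vectors with exactly `k` entries equal to 1. -/
def InW {n : ℕ} (k : ℕ) (w : Fin n → ℝ) : Prop :=
  (∀ i, w i = 0 ∨ w i = 1) ∧ (Finset.univ.filter (fun i => w i = 1)).card = k

/-- membership in the polytope `P^k`. -/
def InP {n : ℕ} (k : ℕ) (w : Fin n → ℝ) : Prop :=
  (∑ i, w i) = (k : ℝ) ∧ ∀ i, 0 ≤ w i ∧ w i ≤ 1

/-- `S` is an index set of the `k` largest absolute entries of `x`. -/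
def IsTopK {n : ℕ} (x : Fin n → ℝ) (k : ℕ) (S : Finset (Fin n)) : Prop :=
  S.card = k ∧ ∀ i ∈ S, ∀ j ∉ S, |x j| ≤ |x i|

/-- `d` is a hard thresholding `H_k(z)` of `z`. -/
def IsHT {n : ℕ} (k : ℕ) (z d : Fin n → ℝ) : Prop :=
  Sparse k d ∧ ∀ d' : Fin n → ℝ, Sparse k d' → n2 (z - d) ≤ n2 (z - d')

/-- `w 0, …, w (ω-1)` are successive compression minimizers at `x^p` (with `u^p = up`). -/
def SCM {m n : ℕ} (A : Matrix (Fin m) (Fin n) ℝ) (y : Fin m → ℝ) (k ω : ℕ)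
    (up : Fin n → ℝ) (w : ℕ → Fin n → ℝ) : Prop :=
  ∀ j < ω, InP k (w j) ∧ ∀ v : Fin n → ℝ, InP k v →
    n2 (y - A.mulVec (up * (∏ l ∈ Finset.range j, w l) * w j)) ≤
    n2 (y - A.mulVec (up * (∏ l ∈ Finset.range j, w l) * v))

/-- the `ℓ∞` norm of `x` restricted to `T` (zero if `T` is empty). -/
noncomputable def linfT {n : ℕ} (x : Fin n → ℝ) (T : Finset (Fin n)) : ℝ :=
  if h : T.Nonempty then T.sup' h (fun j => |x j|) else 0

/-!
The gradient step has error `u^p - x_S = (I - AᵀA)(x^p - x_S) + Aᵀν'`, which the RIP makes small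
on every set of `k` coordinates. Outside `S` a compressed vector `u^p ⊗ W` carries nothing but
this error, and since `W ↦ ‖A (z ⊗ W)‖` is convex and the vertices of
`{0 ≤ W ≤ 1, ∑ W ≤ k}` are indicators of sets of size at most `k` (Krein–Milman), the image under
`A` of that part is controlled by `δ_k`. Each compression step does at least as well as keeping
the coordinates in `S`, which bounds the residual after three steps and hence the error of
`u^p ⊗ w⁽¹⁾ ⊗ w⁽²⁾ ⊗ w⁽³⁾` on `S`. Hard thresholding misses of `S` only as much energy as it
keeps outside `S`, and the least-squares step on `supp(x^#)` turns the error left outside that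
support into the final bound.
-/

open Matrix

section Norm
variable {ι : Type*} [Fintype ι]

lemma n2_eq_norm (x : ι → ℝ) : n2 x = ‖WithLp.toLp 2 x‖ := by
  simp [n2, nsq, EuclideanSpace.norm_eq]

lemma nsq_nonneg (x : ι → ℝ) : 0 ≤ nsq x := Finset.sum_nonneg fun i _ => sq_nonneg (x i)

lemma n2_nonneg (x : ι → ℝ) : 0 ≤ n2 x := Real.sqrt_nonneg _

lemma sq_n2 (x : ι → ℝ) : n2 x ^ 2 = nsq x :=
  Real.sq_sqrt (nsq_nonneg x)

lemma nsq_eq_dotProduct (x : ι → ℝ) : nsq x = x ⬝ᵥ x := by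
  simp [nsq, dotProduct, sq]

lemma nsq_smul (c : ℝ) (x : ι → ℝ) : nsq (c • x) = c ^ 2 * nsq x := by
  simp [nsq, Finset.mul_sum, mul_pow]

lemma n2_pos {x : ι → ℝ} (hx : x ≠ 0) : 0 < n2 x := by
  rw [n2_eq_norm, norm_pos_iff]
  simpa using hx

lemma n2_add_le (x y : ι → ℝ) : n2 (x + y) ≤ n2 x + n2 y := by
  simpa only [n2_eq_norm, WithLp.toLp_add] using norm_add_le _ _

lemma n2_neg (x : ι → ℝ) : n2 (-x) = n2 x := by
  simp only [n2_eq_norm, WithLp.toLp_neg, norm_neg]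

lemma n2_sub_le (x y : ι → ℝ) : n2 (x - y) ≤ n2 x + n2 y := by
  simpa only [sub_eq_add_neg, n2_neg] using n2_add_le x (-y)

lemma n2_le_n2_of_abs_le {x y : ι → ℝ} (h : ∀ i, |x i| ≤ |y i|) : n2 x ≤ n2 y :=
  Real.sqrt_le_sqrt <| Finset.sum_le_sum fun i _ => sq_le_sq.mpr (h i)

lemma convexOn_n2_comp_linearMap {E : Type*} [AddCommGroup E] [Module ℝ E]
    (L : E →ₗ[ℝ] ι → ℝ) : ConvexOn ℝ Set.univ fun z => n2 (L z) := by
  simp only [n2_eq_norm]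
  exact (convexOn_norm convex_univ).comp_linearMap
    ((WithLp.linearEquiv 2 ℝ (ι → ℝ)).symm.toLinearMap ∘ₗ L)

end Norm

section Restr
variable {n : ℕ}

lemma mem_supp {x : Fin n → ℝ} {i : Fin n} : i ∈ supp x ↔ x i ≠ 0 := by
  simp [supp]

lemma apply_eq_zero_of_notMem_supp {x : Fin n → ℝ} {i : Fin n} (h : i ∉ supp x) :
    x i = 0 := by
  simpa [mem_supp] using h

lemma supp_add_subset (x y : Fin n → ℝ) : supp (x + y) ⊆ supp x ∪ supp y := by
  intro i
  simp only [Finset.mem_union, mem_supp, Pi.add_apply]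
  contrapose!
  simp +contextual

lemma supp_sub_subset (x y : Fin n → ℝ) : supp (x - y) ⊆ supp x ∪ supp y := by
  intro i
  simp only [Finset.mem_union, mem_supp, Pi.sub_apply]
  contrapose!
  simp +contextual

lemma supp_smul_subset (c : ℝ) (x : Fin n → ℝ) : supp (c • x) ⊆ supp x := by
  intro i
  simp only [mem_supp, Pi.smul_apply, smul_eq_mul]
  exact right_ne_zero_of_mul

lemma Sparse.mono {k k' : ℕ} {x : Fin n → ℝ} (hx : Sparse k x) (h : k ≤ k') : Sparse k' x :=
  hx.trans h

lemma supp_restr (x : Fin n → ℝ) (T : Finset (Fin n)) : supp (restr x T) ⊆ T := by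
  intro i
  simp only [mem_supp, restr]
  split_ifs with h <;> simp [h]

lemma sparse_restr {k : ℕ} (x : Fin n → ℝ) {T : Finset (Fin n)} (h : T.card ≤ k) :
    Sparse k (restr x T) :=
  (Finset.card_le_card (supp_restr x T)).trans h

lemma restr_eq_self {x : Fin n → ℝ} {T : Finset (Fin n)} (h : supp x ⊆ T) :
    restr x T = x := by
  funext i
  by_cases hi : i ∈ T
  · simp [restr, hi]
  · simp [restr, hi, apply_eq_zero_of_notMem_supp fun h' => hi (h h')]

lemma restr_eq_zero {x : Fin n → ℝ} {T : Finset (Fin n)} (h : Disjoint (supp x) T) :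
    restr x T = 0 := by
  funext i
  by_cases hi : i ∈ T
  · simp [restr, hi, apply_eq_zero_of_notMem_supp (Finset.disjoint_right.mp h hi)]
  · simp [restr, hi]

lemma restr_add (x y : Fin n → ℝ) (T : Finset (Fin n)) :
    restr (x + y) T = restr x T + restr y T := by
  funext i
  by_cases hi : i ∈ T <;> simp [restr, hi]

lemma restr_sub (x y : Fin n → ℝ) (T : Finset (Fin n)) :
    restr (x - y) T = restr x T - restr y T := by
  funext i
  by_cases hi : i ∈ T <;> simp [restr, hi]

lemma restr_add_restr_compl (x : Fin n → ℝ) (T : Finset (Fin n)) :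
    restr x T + restr x Tᶜ = x := by
  funext i
  by_cases hi : i ∈ T <;> simp [restr, hi]

lemma restr_restr (x : Fin n → ℝ) (T U : Finset (Fin n)) :
    restr (restr x T) U = restr x (T ∩ U) := by
  funext i
  by_cases hT : i ∈ T <;> by_cases hU : i ∈ U <;> simp [restr, hT, hU]

lemma restr_mul (x w : Fin n → ℝ) (T : Finset (Fin n)) :
    restr (x * w) T = restr x T * w := by
  funext i
  by_cases hi : i ∈ T <;> simp [restr, hi]

lemma mul_restr_one (x : Fin n → ℝ) (T : Finset (Fin n)) : x * restr 1 T = restr x T := by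
  funext i
  by_cases hi : i ∈ T <;> simp [restr, hi]

lemma nsq_restr (x : Fin n → ℝ) (T : Finset (Fin n)) :
    nsq (restr x T) = ∑ i ∈ T, x i ^ 2 := by
  simp [nsq, restr, Finset.sum_ite_mem]

lemma dotProduct_restr (x y : Fin n → ℝ) (T : Finset (Fin n)) :
    x ⬝ᵥ restr y T = restr x T ⬝ᵥ restr y T := by
  simp only [dotProduct, restr]
  refine Finset.sum_congr rfl fun i _ => ?_
  split_ifs <;> simp

lemma dotProduct_restr_self (x : Fin n → ℝ) (T : Finset (Fin n)) :
    x ⬝ᵥ restr x T = nsq (restr x T) := by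
  rw [dotProduct_restr, nsq_eq_dotProduct]

lemma n2_restr_le_n2_restr {T U : Finset (Fin n)} (h : T ⊆ U) (x : Fin n → ℝ) :
    n2 (restr x T) ≤ n2 (restr x U) :=
  n2_le_n2_of_abs_le fun i => by
    by_cases hT : i ∈ T
    · simp [restr, hT, h hT]
    · simp [restr, hT]

lemma n2_restr_le (x : Fin n → ℝ) (T : Finset (Fin n)) : n2 (restr x T) ≤ n2 x := by
  simpa [restr_eq_self (Finset.subset_univ (supp x))]
    using n2_restr_le_n2_restr (Finset.subset_univ T) x

lemma n2_sq_eq_add_restr_compl (x : Fin n → ℝ) (T : Finset (Fin n)) :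
    n2 x ^ 2 = n2 (restr x T) ^ 2 + n2 (restr x Tᶜ) ^ 2 := by
  rw [sq_n2, sq_n2, sq_n2, nsq_restr, nsq_restr, Finset.sum_add_sum_compl]
  rfl

end Restr

section RIP
variable {m n : ℕ} {A : Matrix (Fin m) (Fin n) ℝ} {q : ℕ} {δ : ℝ}

lemma IsRIC.mono {q' : ℕ} {δ' : ℝ} (hδ : IsRIC A q δ) (hδ' : IsRIC A q' δ') (h : q ≤ q') :
    δ ≤ δ' :=
  hδ.2 ⟨hδ'.1.1, fun z hz => hδ'.1.2 z (hz.mono h)⟩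

lemma SatRIP.n2_mulVec_le (hA : SatRIP A q δ) {z : Fin n → ℝ} (hz : Sparse q z) :
    n2 (A *ᵥ z) ≤ Real.sqrt (1 + δ) * n2 z := by
  rw [n2, n2, ← Real.sqrt_mul' _ (nsq_nonneg z)]
  exact Real.sqrt_le_sqrt (hA z hz).2

lemma SatRIP.n2_le_n2_mulVec (hA : SatRIP A q δ) (hδ : δ < 1) {z : Fin n → ℝ}
    (hz : Sparse q z) : Real.sqrt (1 - δ) * n2 z ≤ n2 (A *ᵥ z) := by
  rw [n2, n2, ← Real.sqrt_mul (by linarith)]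
  exact Real.sqrt_le_sqrt (hA z hz).1

lemma SatRIP.abs_dotProduct_sub_le_half (hA : SatRIP A q δ) {u v : Fin n → ℝ}
    (huv : (supp u ∪ supp v).card ≤ q) :
    |(A *ᵥ u) ⬝ᵥ (A *ᵥ v) - u ⬝ᵥ v| ≤ δ / 2 * (nsq u + nsq v) := by
  have hadd := hA (u + v) <| (Finset.card_le_card (supp_add_subset u v)).trans huv
  have hsub := hA (u - v) <| (Finset.card_le_card (supp_sub_subset u v)).trans huv
  simp only [mulVec_add, mulVec_sub, nsq_eq_dotProduct, add_dotProduct, dotProduct_add,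
    sub_dotProduct, dotProduct_sub, dotProduct_comm v u, dotProduct_comm (A *ᵥ v)] at *
  rw [abs_le]
  constructor <;> nlinarith

lemma SatRIP.abs_dotProduct_sub_le (hA : SatRIP A q δ) {u v : Fin n → ℝ}
    (huv : (supp u ∪ supp v).card ≤ q) :
    |(A *ᵥ u) ⬝ᵥ (A *ᵥ v) - u ⬝ᵥ v| ≤ δ * n2 u * n2 v := by
  obtain rfl | hu := eq_or_ne u 0
  · simp [n2, nsq]
  obtain rfl | hv := eq_or_ne v 0
  · simp [n2, nsq]
  have hU := n2_pos hu
  have hV := n2_pos hv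
  -- rescale `u` and `v` to equal norms `√(‖u‖‖v‖)`, where the polarization bound is sharp
  set a := Real.sqrt (n2 v / n2 u)
  have ha : 0 < a := Real.sqrt_pos.mpr (by positivity)
  have ha2 : a ^ 2 = n2 v / n2 u := Real.sq_sqrt (by positivity)
  have key := hA.abs_dotProduct_sub_le_half (u := a • u) (v := a⁻¹ • v) <|
    (Finset.card_le_card (Finset.union_subset_union (supp_smul_subset _ _)
      (supp_smul_subset _ _))).trans huv
  simp only [mulVec_smul, smul_dotProduct, dotProduct_smul, smul_eq_mul,
    inv_mul_cancel_left₀ ha.ne', nsq_smul] at key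
  rw [← sq_n2, ← sq_n2, inv_pow, ha2] at key
  convert key using 1
  field_simp
  ring

lemma SatRIP.n2_restr_sub_gram_le (hA : SatRIP A q δ) (hδ : 0 ≤ δ) {e : Fin n → ℝ}
    {T : Finset (Fin n)} (hT : (T ∪ supp e).card ≤ q) :
    n2 (restr (e - Aᵀ *ᵥ (A *ᵥ e)) T) ≤ δ * n2 e := by
  set v := restr (e - Aᵀ *ᵥ (A *ᵥ e)) T
  have hsq : n2 v ^ 2 ≤ δ * n2 e * n2 v := by
    have key := hA.abs_dotProduct_sub_le (u := e) (v := v) <| by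
      rw [Finset.union_comm]
      exact (Finset.card_le_card (Finset.union_subset_union (supp_restr _ _)
        subset_rfl)).trans hT
    have hv : n2 v ^ 2 = e ⬝ᵥ v - (A *ᵥ e) ⬝ᵥ (A *ᵥ v) := by
      rw [sq_n2, ← dotProduct_restr_self, sub_dotProduct, dotProduct_comm (Aᵀ *ᵥ _),
        dotProduct_transpose_mulVec, dotProduct_comm (A *ᵥ _)]
    rw [hv, ← abs_neg, neg_sub] at *
    exact (le_abs_self _).trans key
  rcases (n2_nonneg v).eq_or_lt with h0 | h0
  · rw [← h0]
    exact mul_nonneg hδ (n2_nonneg e)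
  · exact le_of_mul_le_mul_right (by nlinarith) h0

end RIP

section Polytope

/-- Contains `P^k` and, unlike `P^k`, also the entrywise products of its elements. -/
def cappedCube (n k : ℕ) : Set (Fin n → ℝ) :=
  {W | (∀ i, W i ∈ Set.Icc 0 1) ∧ ∑ i, W i ≤ k}

variable {n k : ℕ}

lemma convex_cappedCube : Convex ℝ (cappedCube n k) := by
  intro W hW V hV a b ha hb hab
  refine ⟨fun i => ⟨?_, ?_⟩, ?_⟩
  · have := (hW.1 i).1; have := (hV.1 i).1
    simp only [Pi.add_apply, Pi.smul_apply, smul_eq_mul]; positivity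
  · have := (hW.1 i).2; have := (hV.1 i).2
    simp only [Pi.add_apply, Pi.smul_apply, smul_eq_mul]; nlinarith
  · simp only [Pi.add_apply, Pi.smul_apply, smul_eq_mul, Finset.sum_add_distrib,
      ← Finset.mul_sum]
    nlinarith [hW.2, hV.2]

lemma isCompact_cappedCube : IsCompact (cappedCube n k) := by
  refine (isCompact_univ_pi fun _ => isCompact_Icc).of_isClosed_subset ?_
    fun W hW => Set.mem_univ_pi.mpr hW.1
  rw [cappedCube, Set.ofPred_and, Set.ofPred_forall]
  exact (isClosed_iInter fun i => isClosed_Icc.preimage (continuous_apply i)).inter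
    (isClosed_le (continuous_finsetSum _ fun i _ => continuous_apply i) continuous_const)

lemma sum_restr_one (T : Finset (Fin n)) : ∑ i, restr 1 T i = T.card := by
  simp [restr, Finset.sum_ite_mem]

lemma notMem_extremePoints_of_forall_abs_le {E : Type*} [AddCommGroup E] [Module ℝ E]
    {C : Set E} {x d : E} (hd : d ≠ 0) {ε : ℝ} (hε : 0 < ε)
    (h : ∀ s, |s| ≤ ε → x + s • d ∈ C) : x ∉ C.extremePoints ℝ := fun hx => by
  have hmid : x ∈ openSegment ℝ (x + ε • d) (x + (-ε) • d) :=
    ⟨1 / 2, 1 / 2, by norm_num, by norm_num, by norm_num, by module⟩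
  have := ((mem_extremePoints.mp hx).2 _ (h ε (abs_of_pos hε).le) _
    (h (-ε) (by rw [abs_neg, abs_of_pos hε])) hmid).1
  exact hd (by simpa [hε.ne'] using this)

variable {W : Fin n → ℝ}

lemma notMem_extremePoints_cappedCube_of_ne (hW : W ∈ cappedCube n k) {i j : Fin n}
    (hij : i ≠ j) (hi : W i ∈ Set.Ioo 0 1) (hj : W j ∈ Set.Ioo 0 1) :
    W ∉ (cappedCube n k).extremePoints ℝ := by
  refine notMem_extremePoints_of_forall_abs_le (d := Pi.single i 1 - Pi.single j 1)
    (fun h => by simpa [hij.symm] using congrFun h i)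
    (ε := min (min (W i) (1 - W i)) (min (W j) (1 - W j)))
    (by simp only [lt_min_iff, sub_pos]; exact ⟨⟨hi.1, hi.2⟩, hj.1, hj.2⟩) fun s hs => ?_
  simp only [abs_le, neg_le, le_min_iff] at hs
  refine ⟨fun l => ?_, ?_⟩
  · rcases eq_or_ne l i with rfl | hli
    · simp only [Pi.add_apply, Pi.smul_apply, Pi.sub_apply, Pi.single_eq_same,
        Pi.single_eq_of_ne hij, smul_eq_mul, Set.mem_Icc]
      constructor <;> linarith
    rcases eq_or_ne l j with rfl | hlj
    · simp only [Pi.add_apply, Pi.smul_apply, Pi.sub_apply, Pi.single_eq_same,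
        Pi.single_eq_of_ne hli, smul_eq_mul, Set.mem_Icc]
      constructor <;> linarith
    · simpa [hli, hlj] using hW.1 l
  · simpa [Finset.sum_add_distrib, ← Finset.mul_sum, Finset.sum_sub_distrib] using hW.2

lemma notMem_extremePoints_cappedCube_of_sum_lt (hW : W ∈ cappedCube n k) {i : Fin n}
    (hi : W i ∈ Set.Ioo 0 1) (hsum : ∑ l, W l < k) :
    W ∉ (cappedCube n k).extremePoints ℝ := by
  refine notMem_extremePoints_of_forall_abs_le (d := Pi.single i 1)
    (fun h => by simpa using congrFun h i) (ε := min (min (W i) (1 - W i)) (k - ∑ l, W l))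
    (by simp only [lt_min_iff, sub_pos]; exact ⟨⟨hi.1, hi.2⟩, hsum⟩) fun s hs => ?_
  simp only [abs_le, neg_le, le_min_iff] at hs
  refine ⟨fun l => ?_, ?_⟩
  · rcases eq_or_ne l i with rfl | hli
    · simp only [Pi.add_apply, Pi.smul_apply, Pi.single_eq_same, smul_eq_mul, Set.mem_Icc]
      constructor <;> linarith
    · simpa [hli] using hW.1 l
  · simp only [Pi.add_apply, Pi.smul_apply, smul_eq_mul, Finset.sum_add_distrib,
      ← Finset.mul_sum, Finset.sum_pi_single', Finset.mem_univ, if_true, mul_one]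
    linarith

lemma sum_ne_natCast_of_forall_ne {i : Fin n} (hi : W i ∈ Set.Ioo 0 1)
    (hW : ∀ j ≠ i, W j = 0 ∨ W j = 1) (k : ℕ) : ∑ l, W l ≠ k := by
  obtain ⟨N, hN⟩ : ∃ N : ℕ, ∑ l ∈ Finset.univ.erase i, W l = N := by
    refine ⟨((Finset.univ.erase i).filter (W · = 1)).card, ?_⟩
    rw [← Finset.sum_boole]
    refine Finset.sum_congr rfl fun l hl => ?_
    rcases hW l (Finset.ne_of_mem_erase hl) with h | h <;> simp [h]
  rw [← Finset.add_sum_erase _ _ (Finset.mem_univ i), hN]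
  intro heq
  have h1 : (N : ℝ) < k := by linarith [hi.1]
  have h2 : (k : ℝ) < N + 1 := by linarith [hi.2]
  norm_cast at h1 h2
  omega

lemma eq_zero_or_eq_one_of_mem_extremePoints_cappedCube
    (hW : W ∈ (cappedCube n k).extremePoints ℝ) (i : Fin n) : W i = 0 ∨ W i = 1 := by
  have hfrac : ∀ j, W j ≠ 0 → W j ≠ 1 → W j ∈ Set.Ioo 0 1 := fun j h0 h1 =>
    ⟨lt_of_le_of_ne (hW.1.1 j).1 (Ne.symm h0), lt_of_le_of_ne (hW.1.1 j).2 h1⟩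
  by_contra! hi
  have hi := hfrac i hi.1 hi.2
  by_cases hj : ∃ j ≠ i, W j ≠ 0 ∧ W j ≠ 1
  · obtain ⟨j, hji, hj0, hj1⟩ := hj
    exact notMem_extremePoints_cappedCube_of_ne hW.1 hji.symm hi (hfrac j hj0 hj1) hW
  · push Not at hj
    refine notMem_extremePoints_cappedCube_of_sum_lt hW.1 hi
      (lt_of_le_of_ne hW.1.2 (sum_ne_natCast_of_forall_ne hi (fun j hji => ?_) k)) hW
    exact or_iff_not_imp_left.mpr (hj j hji)

lemma exists_eq_restr_one_of_mem_extremePoints_cappedCube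
    (hW : W ∈ (cappedCube n k).extremePoints ℝ) : ∃ T, T.card ≤ k ∧ W = restr 1 T := by
  set T := Finset.univ.filter (W · = 1)
  have hWT : W = restr 1 T := by
    funext i
    rcases eq_zero_or_eq_one_of_mem_extremePoints_cappedCube hW i with h | h <;> simp [T, restr, h]
  refine ⟨T, ?_, hWT⟩
  have := hW.1.2
  rw [hWT, sum_restr_one] at this
  exact_mod_cast this

lemma cappedCube_subset_convexHull :
    cappedCube n k ⊆ convexHull ℝ {W | ∃ T : Finset (Fin n), T.card ≤ k ∧ W = restr 1 T} := by
  have hfin : {W | ∃ T : Finset (Fin n), T.card ≤ k ∧ W = restr 1 T}.Finite :=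
    (Set.finite_range fun T : Finset (Fin n) => restr 1 T).subset fun W ⟨T, _, hT⟩ => ⟨T, hT.symm⟩
  rw [← closure_convexHull_extremePoints isCompact_cappedCube convex_cappedCube]
  exact closure_minimal (convexHull_mono fun W hW =>
      exists_eq_restr_one_of_mem_extremePoints_cappedCube hW)
    (hfin.isCompact_convexHull (𝕜 := ℝ)).isClosed

lemma ConvexOn.exists_le_of_mem_cappedCube {f : (Fin n → ℝ) → ℝ} (hf : ConvexOn ℝ Set.univ f)
    (hW : W ∈ cappedCube n k) :
    ∃ T : Finset (Fin n), T.card ≤ k ∧ f W ≤ f (restr 1 T) := by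
  obtain ⟨_, ⟨T, hT, rfl⟩, hle⟩ :=
    hf.exists_ge_of_mem_convexHull (Set.subset_univ _) (cappedCube_subset_convexHull hW)
  exact ⟨T, hT, hle⟩

end Polytope

section Compression
variable {m n k : ℕ} {A : Matrix (Fin m) (Fin n) ℝ} {δ : ℝ}

lemma SatRIP.n2_mulVec_mul_le (hA : SatRIP A k δ) {z W : Fin n → ℝ} (hW : W ∈ cappedCube n k)
    {D : ℝ} (hz : ∀ T : Finset (Fin n), T.card ≤ k → n2 (restr z T) ≤ D) :
    n2 (A *ᵥ (z * W)) ≤ Real.sqrt (1 + δ) * D := by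
  obtain ⟨T, hT, hle⟩ := (convexOn_n2_comp_linearMap
    (A.mulVecLin ∘ₗ LinearMap.mulLeft ℝ z)).exists_le_of_mem_cappedCube hW
  simp only [LinearMap.comp_apply, LinearMap.mulLeft_apply, mulVecLin_apply,
    mul_restr_one] at hle
  exact hle.trans <| (hA.n2_mulVec_le (sparse_restr z hT)).trans <|
    mul_le_mul_of_nonneg_left (hz T hT) (Real.sqrt_nonneg _)

lemma InP.mem_cappedCube {w : Fin n → ℝ} (hw : InP k w) : w ∈ cappedCube n k :=
  ⟨fun i => hw.2 i, hw.1.le⟩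

lemma mul_mem_cappedCube {W w : Fin n → ℝ} (hW : W ∈ cappedCube n k)
    (hw : ∀ i, w i ∈ Set.Icc 0 1) : W * w ∈ cappedCube n k := by
  refine ⟨fun i => ⟨mul_nonneg (hW.1 i).1 (hw i).1, mul_le_one₀ (hW.1 i).2 (hw i).1 (hw i).2⟩,
    le_trans (Finset.sum_le_sum fun i _ => ?_) hW.2⟩
  exact mul_le_of_le_one_right (hW.1 i).1 (hw i).2

lemma inP_restr_one {T : Finset (Fin n)} (hT : T.card = k) : InP k (restr 1 T) :=
  ⟨by rw [sum_restr_one, hT], fun i => by by_cases hi : i ∈ T <;> simp [restr, hi]⟩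

variable {y : Fin m → ℝ} {ω : ℕ} {u : Fin n → ℝ} {w : ℕ → Fin n → ℝ}

lemma SCM.prod_mem_cappedCube (hw : SCM A y k ω u w) {j : ℕ} (hj : j < ω) :
    ∏ l ∈ Finset.range (j + 1), w l ∈ cappedCube n k := by
  induction j with
  | zero => simpa using (hw 0 hj).1.mem_cappedCube
  | succ j ih =>
    rw [Finset.prod_range_succ]
    exact mul_mem_cappedCube (ih (by omega)) (hw _ hj).1.2

lemma mulVec_add_mulVec_restr_compl (A : Matrix (Fin m) (Fin n) ℝ) (z : Fin n → ℝ)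
    (S : Finset (Fin n)) : A *ᵥ restr z S + A *ᵥ restr z Sᶜ = A *ᵥ z := by
  rw [← mulVec_add, restr_add_restr_compl]

lemma n2_sub_mulVec_restr_le (y : Fin m → ℝ) (z : Fin n → ℝ) (S : Finset (Fin n)) :
    n2 (y - A *ᵥ restr z S) ≤ n2 (y - A *ᵥ z) + n2 (A *ᵥ restr z Sᶜ) := by
  have : y - A *ᵥ restr z S = (y - A *ᵥ z) + A *ᵥ restr z Sᶜ := by
    rw [← mulVec_add_mulVec_restr_compl A z S]
    abel
  exact this ▸ n2_add_le _ _

/-- Each compression step does at least as well as the indicator of `S` (which lies in `P^k`),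
and that only discards the part of the previous iterate outside `S`. -/
lemma SCM.n2_sub_mulVec_le (hw : SCM A y k ω u w) {S : Finset (Fin n)} (hS : S.card = k)
    {M : ℝ} (hM : ∀ W ∈ cappedCube n k, n2 (A *ᵥ restr (u * W) Sᶜ) ≤ M) {j : ℕ} (hj : j < ω) :
    n2 (y - A *ᵥ (u * ∏ l ∈ Finset.range (j + 1), w l)) ≤ n2 (y - A *ᵥ restr u S) + j * M := by
  induction j with
  | zero => simpa [mul_restr_one] using (hw 0 hj).2 _ (inP_restr_one hS)
  | succ j ih =>
    have hstep := (hw (j + 1) hj).2 _ (inP_restr_one hS)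
    rw [mul_restr_one] at hstep
    rw [Finset.prod_range_succ, ← mul_assoc]
    calc _ ≤ _ := hstep
      _ ≤ _ := n2_sub_mulVec_restr_le y _ S
      _ ≤ _ := add_le_add (ih (by omega)) (hM _ (hw.prod_mem_cappedCube (by omega)))
      _ = _ := by push_cast; ring

end Compression

section Recovery
variable {m n k q : ℕ} {A : Matrix (Fin m) (Fin n) ℝ} {δ : ℝ} {xS : Fin n → ℝ}
  {ν' y : Fin m → ℝ} {S : Finset (Fin n)}

lemma gradStep_sub_eq (hy : y = A *ᵥ xS + ν') (z : Fin n → ℝ) :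
    z + Aᵀ *ᵥ (y - A *ᵥ z) - xS = ((z - xS) - Aᵀ *ᵥ (A *ᵥ (z - xS))) + Aᵀ *ᵥ ν' := by
  subst hy
  simp only [mulVec_sub, mulVec_add]
  abel

lemma SatRIP.n2_restr_gradStep_sub_le (hA : SatRIP A q δ) (hδ : 0 ≤ δ)
    (hy : y = A *ᵥ xS + ν') {z : Fin n → ℝ} {T : Finset (Fin n)}
    (hT : (T ∪ supp (z - xS)).card ≤ q) :
    n2 (restr (z + Aᵀ *ᵥ (y - A *ᵥ z) - xS) T) ≤ δ * n2 (z - xS) + n2 (Aᵀ *ᵥ ν') := by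
  rw [gradStep_sub_eq hy, restr_add]
  exact (n2_add_le _ _).trans <|
    add_le_add (hA.n2_restr_sub_gram_le hδ hT) (n2_restr_le _ _)

lemma SatRIP.n2_sub_mulVec_restr_le (hA : SatRIP A k δ) (hy : y = A *ᵥ xS + ν')
    (hxS : supp xS ⊆ S) (hS : S.card ≤ k) (v : Fin n → ℝ) :
    n2 (y - A *ᵥ restr v S) ≤ Real.sqrt (1 + δ) * n2 (restr (v - xS) S) + n2 ν' := by
  have : y - A *ᵥ restr v S = ν' - A *ᵥ restr (v - xS) S := by
    rw [hy, restr_sub, restr_eq_self hxS, mulVec_sub]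
    abel
  rw [this, add_comm]
  exact (n2_sub_le _ _).trans (add_le_add_right (hA.n2_mulVec_le (sparse_restr _ hS)) _)

lemma SatRIP.n2_restr_sub_le (hA : SatRIP A q δ) (hδ : δ < 1) (hy : y = A *ᵥ xS + ν')
    (hxS : supp xS ⊆ S) (hS : S.card ≤ q) (v : Fin n → ℝ) :
    Real.sqrt (1 - δ) * n2 (restr (v - xS) S)
      ≤ n2 (y - A *ᵥ v) + n2 ν' + n2 (A *ᵥ restr v Sᶜ) := by
  have : A *ᵥ restr (v - xS) S = -(y - A *ᵥ v) + ν' - A *ᵥ restr v Sᶜ := by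
    rw [hy, restr_sub, restr_eq_self hxS, ← mulVec_add_mulVec_restr_compl A v S, mulVec_sub]
    abel
  refine (hA.n2_le_n2_mulVec hδ (sparse_restr _ hS)).trans ?_
  rw [this, ← n2_neg (y - A *ᵥ v)]
  exact (n2_sub_le _ _).trans (add_le_add_left (n2_add_le _ _) _)

end Recovery

section Thresholding
variable {n k : ℕ} {v xs : Fin n → ℝ} {S : Finset (Fin n)}

lemma IsHT.n2_restr_compl_supp_le (hxs : IsHT k v xs) (hS : S.card ≤ k) :
    n2 (restr v (supp xs)ᶜ) ≤ n2 (restr v Sᶜ) := by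
  have hout : restr v (supp xs)ᶜ = restr (v - xs) (supp xs)ᶜ := by
    rw [restr_sub, restr_eq_zero (x := xs) disjoint_compl_right, sub_zero]
  have hS' : v - restr v S = restr v Sᶜ := by
    rw [sub_eq_iff_eq_add', restr_add_restr_compl]
  calc n2 (restr v (supp xs)ᶜ) ≤ n2 (v - xs) := hout ▸ n2_restr_le _ _
    _ ≤ n2 (v - restr v S) := hxs.2 _ (sparse_restr v hS)
    _ = n2 (restr v Sᶜ) := by rw [hS']

lemma IsHT.n2_restr_sdiff_le (hxs : IsHT k v xs) (hS : S.card ≤ k) :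
    n2 (restr v (S \ supp xs)) ≤ n2 (restr v (supp xs \ S)) := by
  have h := hxs.n2_restr_compl_supp_le hS
  rw [n2, n2, Real.sqrt_le_sqrt_iff (nsq_nonneg _), nsq_restr, nsq_restr] at h
  rw [n2, n2, nsq_restr, nsq_restr]
  refine Real.sqrt_le_sqrt ?_
  have := Finset.sum_sdiff_sub_sum_sdiff (s₁ := Sᶜ) (s₂ := (supp xs)ᶜ) (f := fun i => v i ^ 2)
  rw [compl_sdiff_compl, compl_sdiff_compl] at this
  linarith

lemma IsHT.n2_restr_sub_compl_supp_le (hxs : IsHT k v xs) (hS : S.card ≤ k) {xS xq : Fin n → ℝ}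
    (hxS : supp xS ⊆ S) (hxq : supp xq ⊆ supp xs) :
    n2 (restr (xq - xS) (supp xs)ᶜ)
      ≤ n2 (restr (v - xS) S) + n2 (restr v (supp xs \ S)) := by
  have hmiss : restr (xq - xS) (supp xs)ᶜ
      = restr (v - xS) (S \ supp xs) - restr v (S \ supp xs) := by
    rw [← restr_sub, sub_sub_cancel_left]
    funext i
    by_cases hi : i ∈ supp xs
    · simp [restr, hi]
    · by_cases hiS : i ∈ S
      · simp [restr, hi, hiS, apply_eq_zero_of_notMem_supp fun h => hi (hxq h)]
      · simp [restr, hi, hiS, apply_eq_zero_of_notMem_supp fun h => hi (hxq h),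
          apply_eq_zero_of_notMem_supp fun h => hiS (hxS h)]
  rw [hmiss]
  exact (n2_sub_le _ _).trans (add_le_add (n2_restr_le_n2_restr Finset.sdiff_subset _)
    (hxs.n2_restr_sdiff_le hS))

end Thresholding

section Arith

lemma le_div_sqrt_add_div_of_sq_eq_sq_add_sq {δ X P C b : ℝ} (hδ0 : 0 ≤ δ) (hδ1 : δ < 1)
    (hP : 0 ≤ P) (hC : 0 ≤ C) (hb : 0 ≤ b) (hXPC : X ^ 2 = P ^ 2 + C ^ 2)
    (hPX : P ≤ δ * X + b) :
    X ≤ C / Real.sqrt (1 - δ ^ 2) + b / (1 - δ) := by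
  have h1δ : 0 < 1 - δ := by linarith
  have hs : 0 < Real.sqrt (1 - δ ^ 2) := Real.sqrt_pos.mpr (by nlinarith)
  set G := (1 - δ) * X - b
  have hXG : X = (G + b) / (1 - δ) := by field_simp; ring
  rcases le_or_gt G 0 with hG | hG
  · rw [hXG, add_div]
    have : 0 ≤ C / Real.sqrt (1 - δ ^ 2) := by positivity
    have : G / (1 - δ) ≤ 0 := div_nonpos_of_nonpos_of_nonneg hG h1δ.le
    linarith
  -- `G ((1 + δ) X + b) = X² - (δX + b)² ≤ P² + C² - (δX + b)²`
  have hGC : G * ((1 + δ) * X + b) ≤ C ^ 2 := by nlinarith [mul_le_mul hPX hPX hP (hP.trans hPX)]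
  have hG1 : G * (1 + δ) ≤ (1 - δ) * ((1 + δ) * X + b) := by simp only [G]; nlinarith
  have hG2 : (G * Real.sqrt (1 - δ ^ 2)) ^ 2 ≤ (C * (1 - δ)) ^ 2 := by
    rw [mul_pow, Real.sq_sqrt (by nlinarith)]
    have h := mul_le_mul_of_nonneg_left hGC h1δ.le
    have h' : G * (G * (1 + δ)) ≤ (1 - δ) * C ^ 2 :=
      (mul_le_mul_of_nonneg_left hG1 hG.le).trans (by linarith)
    nlinarith [mul_le_mul_of_nonneg_left h' h1δ.le]
  have hG' : G ≤ C * (1 - δ) / Real.sqrt (1 - δ ^ 2) := by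
    rw [le_div_iff₀ hs]
    exact (pow_le_pow_iff_left₀ (by positivity) (by positivity) two_ne_zero).mp hG2
  calc X = (G + b) / (1 - δ) := hXG
    _ ≤ (C * (1 - δ) / Real.sqrt (1 - δ ^ 2) + b) / (1 - δ) := by gcongr
    _ = C / Real.sqrt (1 - δ ^ 2) + b / (1 - δ) := by field_simp

lemma rho_lt_one {δk δ2k δ3k : ℝ} (h0 : 0 ≤ δk) (h12 : δk ≤ δ2k) (h23 : δ2k ≤ δ3k)
    (h3 : δ3k ≤ 1 / 9) :
    1 / Real.sqrt (1 - δ2k ^ 2) * ((δ2k + 6 * δ3k) * Real.sqrt ((1 + δk) / (1 - δ2k)) + δ3k)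
      < 1 := by
  have hκ : Real.sqrt ((1 + δk) / (1 - δ2k)) ≤ 9 / 8 := by
    rw [Real.sqrt_le_left (by norm_num), div_le_iff₀ (by linarith)]
    linarith [h12]
  have hnum : (δ2k + 6 * δ3k) * Real.sqrt ((1 + δk) / (1 - δ2k)) + δ3k ≤ 71 / 72 := by
    nlinarith [Real.sqrt_nonneg ((1 + δk) / (1 - δ2k))]
  have hden : 71 / 72 < Real.sqrt (1 - δ2k ^ 2) :=
    Real.lt_sqrt_of_sq_lt (by nlinarith)
  rw [one_div_mul_eq_div, div_lt_one (by linarith)]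
  linarith

/-- `C` stands for the error outside the thresholded support, `X` for the error of the
least-squares iterate, `E` for that of `x^p`, `b` for `‖Aᵀν'‖` and `ν` for `‖ν'‖`. -/
lemma le_recovery_bound {δk δ2k δ3k E b ν X C : ℝ} (h0 : 0 ≤ δk) (h23 : δ2k ≤ δ3k)
    (h3 : δ3k ≤ 1 / 9) (hpos : 0 < δ2k) (hE : 0 ≤ E) (hb : 0 ≤ b) (hν : 0 ≤ ν)
    (hC : Real.sqrt (1 - δ2k) * (C - (δ3k * E + b))
      ≤ Real.sqrt (1 + δk) * (δ2k * E + b + 3 * (δ3k * E + b)) + 2 * ν)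
    (hX : X ≤ C / Real.sqrt (1 - δ2k ^ 2) + b / (1 - δ2k)) :
    X ≤ 1 / Real.sqrt (1 - δ2k ^ 2)
              * ((δ2k + 6 * δ3k) * Real.sqrt ((1 + δk) / (1 - δ2k)) + δ3k) * E
          + 1 / Real.sqrt (1 - δ2k ^ 2)
              * (1 + 5 * (δ2k + 6 * δ3k) / (δ2k + 4 * δ3k)
                  * Real.sqrt ((1 + δk) / (1 - δ2k))) * b
          + 1 / Real.sqrt (1 - δ2k ^ 2)
              * (2 * (δ2k + 6 * δ3k) / ((δ2k + 4 * δ3k) * Real.sqrt (1 - δ2k))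
                  + 1 / (1 - δ2k)) * ν := by
  have h1 : 0 < 1 - δ2k := by linarith
  have hD : 0 < δ2k + 4 * δ3k := by linarith
  set α := Real.sqrt (1 + δk)
  set β := Real.sqrt (1 - δ2k)
  set s := Real.sqrt (1 - δ2k ^ 2)
  have hβ : 0 < β := Real.sqrt_pos.mpr h1
  have hβ2 : β ^ 2 = 1 - δ2k := Real.sq_sqrt h1.le
  have hα : 1 ≤ α := Real.one_le_sqrt.mpr (by linarith)
  have hs : s = β * Real.sqrt (1 + δ2k) := by
    rw [← Real.sqrt_mul h1.le]
    exact congrArg Real.sqrt (by ring)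
  have hs0 : 0 < s := by rw [hs]; exact mul_pos hβ (Real.sqrt_pos.mpr (by linarith))
  have hκ : Real.sqrt ((1 + δk) / (1 - δ2k)) = α / β := Real.sqrt_div' _ h1.le
  have hlead : Real.sqrt (1 + δ2k) ≤ 3 * α := by
    rw [Real.sqrt_le_left (by positivity), mul_pow, Real.sq_sqrt (by linarith)]
    linarith
  have hR5 : 7 ≤ 5 * (δ2k + 6 * δ3k) / (δ2k + 4 * δ3k) := by
    rw [le_div_iff₀ hD]; linarith
  have hR2 : 2 ≤ 2 * (δ2k + 6 * δ3k) / (δ2k + 4 * δ3k) := by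
    rw [le_div_iff₀ hD]; linarith
  have hX' : s * X ≤ C + Real.sqrt (1 + δ2k) / β * b := by
    have : b / (1 - δ2k) = Real.sqrt (1 + δ2k) / β * b / s := by
      rw [hs, ← hβ2]; field_simp
    rw [this, ← add_div, le_div_iff₀ hs0] at hX
    linarith
  have hC' : C ≤ α / β * ((δ2k + 3 * δ3k) * E + 4 * b) + 2 / β * ν + (δ3k * E + b) := by
    have := (le_div_iff₀' hβ).mpr hC
    rw [add_div] at this
    have e1 : α * (δ2k * E + b + 3 * (δ3k * E + b)) / β
        = α / β * ((δ2k + 3 * δ3k) * E + 4 * b) := by ring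
    have e2 : 2 * ν / β = 2 / β * ν := by ring
    linarith
  set R5 := 5 * (δ2k + 6 * δ3k) / (δ2k + 4 * δ3k)
  set R2 := 2 * (δ2k + 6 * δ3k) / (δ2k + 4 * δ3k)
  have hκ0 : 0 ≤ α / β := by positivity
  have hcE : α / β * (δ2k + 3 * δ3k) + δ3k ≤ (δ2k + 6 * δ3k) * (α / β) + δ3k := by
    nlinarith [mul_nonneg hκ0 (by linarith : 0 ≤ δ3k)]
  have hcb : 4 * (α / β) + 1 + Real.sqrt (1 + δ2k) / β ≤ 1 + R5 * (α / β) := by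
    have : Real.sqrt (1 + δ2k) / β ≤ 3 * (α / β) := by
      rw [mul_div_assoc']; exact div_le_div_of_nonneg_right hlead hβ.le
    nlinarith [mul_le_mul_of_nonneg_right hR5 hκ0]
  have hcν : 2 / β ≤ 2 * (δ2k + 6 * δ3k) / ((δ2k + 4 * δ3k) * β) + 1 / (1 - δ2k) := by
    rw [← div_div]
    have : 0 ≤ 1 / (1 - δ2k) := by positivity
    have : 2 / β ≤ R2 / β := div_le_div_of_nonneg_right hR2 hβ.le
    linarith
  have key : s * X ≤ ((δ2k + 6 * δ3k) * (α / β) + δ3k) * E + (1 + R5 * (α / β)) * b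
      + (2 * (δ2k + 6 * δ3k) / ((δ2k + 4 * δ3k) * β) + 1 / (1 - δ2k)) * ν := by
    nlinarith [mul_le_mul_of_nonneg_right hcE hE, mul_le_mul_of_nonneg_right hcb hb,
      mul_le_mul_of_nonneg_right hcν hν]
  rw [hκ]
  calc X ≤ 1 / s * (((δ2k + 6 * δ3k) * (α / β) + δ3k) * E + (1 + R5 * (α / β)) * b
      + (2 * (δ2k + 6 * δ3k) / ((δ2k + 4 * δ3k) * β) + 1 / (1 - δ2k)) * ν) := by
        rw [one_div_mul_eq_div, le_div_iff₀' hs0]; exact key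
    _ = _ := by ring

end Arith

section Iteration
variable {m n k q : ℕ} {A : Matrix (Fin m) (Fin n) ℝ} {δ δ' : ℝ} {xS u : Fin n → ℝ}
  {ν' y : Fin m → ℝ} {S : Finset (Fin n)}

lemma card_union_supp_sub_le (T : Finset (Fin n)) (hxS : supp xS ⊆ S) {z : Fin n → ℝ}
    (hz : Sparse k z) : (T ∪ supp (z - xS)).card ≤ (T ∪ S).card + k := by
  refine (Finset.card_le_card ?_).trans
    ((Finset.card_union_le _ _).trans (Nat.add_le_add_left hz _))
  refine Finset.union_subset (Finset.subset_union_left.trans Finset.subset_union_left)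
    ((supp_sub_subset z xS).trans ?_)
  exact Finset.union_subset Finset.subset_union_right
    (hxS.trans (Finset.subset_union_right.trans Finset.subset_union_left))

lemma restr_mul_eq_restr_sub_mul {T : Finset (Fin n)} (h : Disjoint (supp xS) T)
    (u W : Fin n → ℝ) : restr (u * W) T = restr (u - xS) T * W := by
  rw [restr_mul, restr_sub, restr_eq_zero h, sub_zero]

lemma n2_mul_le_of_mem_cappedCube (z : Fin n → ℝ) {W : Fin n → ℝ} (hW : W ∈ cappedCube n k) :
    n2 (z * W) ≤ n2 z :=
  n2_le_n2_of_abs_le fun i => by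
    rw [Pi.mul_apply, abs_mul]
    exact mul_le_of_le_one_right (abs_nonneg _) (abs_le.mpr ⟨by linarith [(hW.1 i).1], (hW.1 i).2⟩)

lemma SatRIP.n2_mulVec_restr_compl_mul_le (hA : SatRIP A k δ) (hxS : supp xS ⊆ S) {D : ℝ}
    (hD : ∀ T : Finset (Fin n), T.card ≤ k → n2 (restr (u - xS) T) ≤ D) {W : Fin n → ℝ}
    (hW : W ∈ cappedCube n k) : n2 (A *ᵥ restr (u * W) Sᶜ) ≤ Real.sqrt (1 + δ) * D := by
  rw [restr_mul_eq_restr_sub_mul (Finset.disjoint_of_subset_left hxS disjoint_compl_right)]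
  refine hA.n2_mulVec_mul_le hW fun T hT => ?_
  rw [restr_restr]
  exact hD _ ((Finset.card_le_card Finset.inter_subset_right).trans hT)

lemma SCM.n2_restr_sub_compl_supp_le {ω : ℕ} {w : ℕ → Fin n → ℝ} {xs xq : Fin n → ℝ}
    (hω : 0 < ω) (hA : SatRIP A k δ) (hA' : SatRIP A q δ') (hδ' : δ' < 1) (hkq : k ≤ q)
    (hy : y = A *ᵥ xS + ν') (hxS : supp xS ⊆ S) (hS : S.card = k) (hw : SCM A y k ω u w)
    (hxs : IsHT k (u * ∏ l ∈ Finset.range ω, w l) xs) (hxq : supp xq ⊆ supp xs) {D D' : ℝ}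
    (hD' : n2 (restr (u - xS) S) ≤ D')
    (hD : ∀ T : Finset (Fin n), T.card ≤ k → n2 (restr (u - xS) T) ≤ D) :
    Real.sqrt (1 - δ') * (n2 (restr (xq - xS) (supp xs)ᶜ) - D)
      ≤ Real.sqrt (1 + δ) * (D' + ω * D) + 2 * n2 ν' := by
  obtain ⟨j, rfl⟩ : ∃ j, ω = j + 1 := ⟨ω - 1, by omega⟩
  set W := ∏ l ∈ Finset.range (j + 1), w l
  have hW : W ∈ cappedCube n k := hw.prod_mem_cappedCube (by omega)
  have hoff := fun W hW => hA.n2_mulVec_restr_compl_mul_le hxS hD (W := W) hW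
  have hres := hw.n2_sub_mulVec_le hS hoff (j := j) (by omega)
  have hres0 := hA.n2_sub_mulVec_restr_le hy hxS hS.le u
  have hlow := hA'.n2_restr_sub_le hδ' hy hxS (hS ▸ hkq) (u * W)
  have hkept : n2 (restr (u * W) (supp xs \ S)) ≤ D := by
    rw [restr_mul_eq_restr_sub_mul (Finset.disjoint_of_subset_left hxS Finset.disjoint_sdiff)]
    exact (n2_mul_le_of_mem_cappedCube _ hW).trans
      (hD _ ((Finset.card_le_card Finset.sdiff_subset).trans hxs.1))
  have hmiss := hxs.n2_restr_sub_compl_supp_le hS.le hxS hxq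
  have hα : 0 ≤ Real.sqrt (1 + δ) := Real.sqrt_nonneg _
  calc Real.sqrt (1 - δ') * (n2 (restr (xq - xS) (supp xs)ᶜ) - D)
      ≤ Real.sqrt (1 - δ') * n2 (restr (u * W - xS) S) :=
        mul_le_mul_of_nonneg_left (by linarith) (Real.sqrt_nonneg _)
    _ ≤ n2 (y - A *ᵥ (u * W)) + n2 ν' + Real.sqrt (1 + δ) * D :=
        hlow.trans (by linarith [hoff W hW])
    _ ≤ Real.sqrt (1 + δ) * (D' + ↑(j + 1) * D) + 2 * n2 ν' := by
        push_cast
        nlinarith [mul_le_mul_of_nonneg_left hD' hα]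

lemma SatRIP.n2_sub_le_of_restr_eq_zero (hA : SatRIP A q δ) (hδ0 : 0 ≤ δ) (hδ1 : δ < 1)
    (hy : y = A *ᵥ xS + ν') (hxS : supp xS ⊆ S) {T : Finset (Fin n)} (hTS : (T ∪ S).card ≤ q)
    {xq : Fin n → ℝ} (hxq : supp xq ⊆ T) (hls : restr (Aᵀ *ᵥ (y - A *ᵥ xq)) T = 0) :
    n2 (xq - xS) ≤ n2 (restr (xq - xS) Tᶜ) / Real.sqrt (1 - δ ^ 2) + n2 (Aᵀ *ᵥ ν') / (1 - δ) := by
  -- by `hls`, a gradient step from `xq` does not move it on `T`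
  have hT : n2 (restr (xq - xS) T) ≤ δ * n2 (xq - xS) + n2 (Aᵀ *ᵥ ν') := by
    have := hA.n2_restr_gradStep_sub_le hδ0 hy (z := xq) (T := T) <| (Finset.card_le_card <|
      Finset.union_subset Finset.subset_union_left
        ((supp_sub_subset xq xS).trans (Finset.union_subset_union hxq hxS))).trans hTS
    rwa [add_sub_right_comm, restr_add, hls, add_zero] at this
  exact le_div_sqrt_add_div_of_sq_eq_sq_add_sq hδ0 hδ1 (n2_nonneg _)
    (n2_nonneg _) (n2_nonneg _) (n2_sq_eq_add_restr_compl _ T) hT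

end Iteration

theorem stmt13_general
    {m n : ℕ} (A : Matrix (Fin m) (Fin n) ℝ)
    (x : Fin n → ℝ) (ν y : Fin m → ℝ) (hy : y = A.mulVec x + ν)
    (k : ℕ)
    (S : Finset (Fin n)) (hS : IsTopK x k S)
    (ν' : Fin m → ℝ) (hν' : ν' = A.mulVec (restr x Sᶜ) + ν)
    (δk δ2k δ3k : ℝ) (hδk : IsRIC A k δk) (hδ2k : IsRIC A (2 * k) δ2k)
    (hδ3k : IsRIC A (3 * k) δ3k)
    (hδ2kpos : 0 < δ2k) (hδ3kb : δ3k ≤ 1 / 9)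
    (xp : Fin n → ℝ) (hxp : Sparse k xp)
    (up : Fin n → ℝ) (hup : up = xp + A.transpose.mulVec (y - A.mulVec xp))
    (w : ℕ → Fin n → ℝ) (hw : SCM A y k 3 up w)
    (xs : Fin n → ℝ) (hxs : IsHT k (up * ∏ l ∈ Finset.range 3, w l) xs)
    (xq : Fin n → ℝ) (hsupp : supp xq ⊆ supp xs)
    (hls : restr (A.transpose.mulVec (y - A.mulVec xq)) (supp xs) = 0) :
    n2 (xq - restr x S)
        ≤ (1 / Real.sqrt (1 - δ2k ^ 2))
              * ((δ2k + 6 * δ3k) * Real.sqrt ((1 + δk) / (1 - δ2k)) + δ3k)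
              * n2 (xp - restr x S)
          + (1 / Real.sqrt (1 - δ2k ^ 2))
              * (1 + 5 * (δ2k + 6 * δ3k) / (δ2k + 4 * δ3k)
                  * Real.sqrt ((1 + δk) / (1 - δ2k))) * n2 (A.transpose.mulVec ν')
          + (1 / Real.sqrt (1 - δ2k ^ 2))
              * (2 * (δ2k + 6 * δ3k) / ((δ2k + 4 * δ3k) * Real.sqrt (1 - δ2k))
                  + 1 / (1 - δ2k)) * n2 ν'
      ∧ (1 / Real.sqrt (1 - δ2k ^ 2))
            * ((δ2k + 6 * δ3k) * Real.sqrt ((1 + δk) / (1 - δ2k)) + δ3k) < 1 := by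
  have h12 : δk ≤ δ2k := hδk.mono hδ2k (by omega)
  have h23 : δ2k ≤ δ3k := hδ2k.mono hδ3k (by omega)
  refine ⟨?_, rho_lt_one hδk.1.1 h12 h23 hδ3kb⟩
  have hxS : supp (restr x S) ⊆ S := supp_restr x S
  have hyS : y = A *ᵥ restr x S + ν' := by
    rw [hy, hν', ← mulVec_add_mulVec_restr_compl A x S]
    abel
  have herr3 : ∀ T : Finset (Fin n), T.card ≤ k →
      n2 (restr (up - restr x S) T) ≤ δ3k * n2 (xp - restr x S) + n2 (Aᵀ *ᵥ ν') :=
    fun T hT => hup ▸ hδ3k.1.2.n2_restr_gradStep_sub_le hδ3k.1.1 hyS <|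
      (card_union_supp_sub_le T hxS hxp).trans <| by
        have := Finset.card_union_le T S; have := hS.1; omega
  have herr2 := hup ▸ hδ2k.1.2.n2_restr_gradStep_sub_le hδ2k.1.1 hyS <|
    (card_union_supp_sub_le S hxS hxp).trans (by rw [Finset.union_self, hS.1]; omega)
  have hcomp := hw.n2_restr_sub_compl_supp_le (by norm_num) hδk.1.2 hδ2k.1.2 (by linarith)
    (by omega) hyS hxS hS.1 hxs hsupp herr2 herr3
  have hpursuit := hδ2k.1.2.n2_sub_le_of_restr_eq_zero hδ2k.1.1 (by linarith) hyS hxS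
    ((Finset.card_union_le _ _).trans <| by
      have : (supp xs).card ≤ k := hxs.1; have := hS.1; omega) hsupp hls
  exact le_recovery_bound hδk.1.1 h23 hδ3kb hδ2kpos (n2_nonneg _) (n2_nonneg _)
    (n2_nonneg _) (by norm_num at hcomp; linarith) hpursuit

theorem stmt13
    {m n : ℕ} (A : Matrix (Fin m) (Fin n) ℝ)
    (x : Fin n → ℝ) (ν y : Fin m → ℝ) (hy : y = A.mulVec x + ν)
    (k : ℕ) (hk : 0 < k)
    (S : Finset (Fin n)) (hS : IsTopK x k S)
    (ν' : Fin m → ℝ) (hν' : ν' = A.mulVec (restr x Sᶜ) + ν)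
    (δk δ2k δ3k : ℝ) (hδk : IsRIC A k δk) (hδ2k : IsRIC A (2 * k) δ2k)
    (hδ3k : IsRIC A (3 * k) δ3k)
    (hδ2kpos : 0 < δ2k) (hδ3kb : δ3k ≤ 1 / 9)
    (xp : Fin n → ℝ) (hxp : Sparse k xp)
    (up : Fin n → ℝ) (hup : up = xp + A.transpose.mulVec (y - A.mulVec xp))
    (w : ℕ → Fin n → ℝ) (hw : SCM A y k 3 up w)
    (xs : Fin n → ℝ) (hxs : IsHT k (up * ∏ l ∈ Finset.range 3, w l) xs)
    (xq : Fin n → ℝ) (hsupp : supp xq ⊆ supp xs)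
    (hls : restr (A.transpose.mulVec (y - A.mulVec xq)) (supp xs) = 0) :
    n2 (xq - restr x S)
        ≤ (1 / Real.sqrt (1 - δ2k ^ 2))
              * ((δ2k + 6 * δ3k) * Real.sqrt ((1 + δk) / (1 - δ2k)) + δ3k)
              * n2 (xp - restr x S)
          + (1 / Real.sqrt (1 - δ2k ^ 2))
              * (1 + 5 * (δ2k + 6 * δ3k) / (δ2k + 4 * δ3k)
                  * Real.sqrt ((1 + δk) / (1 - δ2k))) * n2 (A.transpose.mulVec ν')
          + (1 / Real.sqrt (1 - δ2k ^ 2))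
              * (2 * (δ2k + 6 * δ3k) / ((δ2k + 4 * δ3k) * Real.sqrt (1 - δ2k))
                  + 1 / (1 - δ2k)) * n2 ν'
      ∧ (1 / Real.sqrt (1 - δ2k ^ 2))
            * ((δ2k + 6 * δ3k) * Real.sqrt ((1 + δk) / (1 - δ2k)) + δ3k) < 1 :=
  stmt13_general A x ν y hy k S hS ν' hν' δk δ2k δ3k hδk hδ2k hδ3k hδ2kpos hδ3kb xp hxp up hup w hw
    xs hxs xq hsupp hls
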